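/- Let a finite rooted tree be given, with ℓ a leaf, and let w̃ : V⁰ → ℝ satisfy w̃_u > 0 for all u ∈ V⁰. Let x, y, δ ∈ K(T) with δ_u > 0 for all u, let λ : V → ℝ satisfy λ_u ≥ 0 for all u and λ_u = 0 for every leaf u, let s ≥ 0, and let x'_u for u ∈ V⁰∖{c_r} be given by the mirror-descent dynamic. Let d ≥ 2 be a real and k ≥ 1 an integer with δ_ℓ ≥ d^{1−k}. Then the rate of change of the modified Bregman divergence D = Σ_{u∈V⁰} w̃_u·(2·y_u·log((1+δ_u)/(x_u+δ_u)) + x_u) satisfies s·(2·y_ℓ·log((1+δ_ℓ)/(x_ℓ+δ_ℓ)) + x_ℓ) + Σ_{u ∈ V⁰∖{c_r}} w̃_u·x'_u·(1 − 2·y_u/(x_u+δ_u)) ≤ −s·x_ℓ + 2·y_ℓ·s·(2 + k·log d). -/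

import Mathlib

/-!
Expanding the velocities, the Lagrange-multiplier part of the sum is
`Σ (λ_{p_u} - λ_u) f_u` with `f = x + δ - 2y`. Since `f` satisfies the flow-conservation
equations of `K(T)` and vanishes at `r` (hence at `c_r`, so the sum may run over all of `V⁰`), regrouping `Σ λ_{p_u} f_u` by parents turns it into
`Σ λ_u f_u` (leaves contribute nothing because `λ` vanishes there), so this part telescopes to zero.
Only the term of the leaf `ℓ` survives, and it is controlled by `x_ℓ / (x_ℓ + δ_ℓ) ≤ 1` together with
`(1 + δ_ℓ) / (x_ℓ + δ_ℓ) ≤ 1 + 1 / δ_ℓ ≤ 1 + d^(k-1) ≤ d^k`.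
-/

open Finset Real

lemma one_le_pow_sub_one_mul_zpow {d : ℝ} (hd : 2 ≤ d) {k : ℕ} (hk : 1 ≤ k) :
    1 ≤ (d ^ k - 1) * d ^ (1 - (k : ℤ)) := by
  have hd0 : d ≠ 0 := by positivity
  have hprod : d ^ k * d ^ (1 - (k : ℤ)) = d := by
    rw [← zpow_natCast, ← zpow_add₀ hd0]
    norm_num
  have hsmall : d ^ (1 - (k : ℤ)) ≤ 1 := zpow_le_one_of_nonpos₀ (by linarith) (by omega)
  linarith

lemma log_one_add_div_add_le {d : ℝ} (hd : 2 ≤ d) {k : ℕ} (hk : 1 ≤ k) {X D : ℝ} (hX : 0 ≤ X)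
    (hD : d ^ (1 - (k : ℤ)) ≤ D) : log ((1 + D) / (X + D)) ≤ k * log d := by
  have hD0 : 0 < D := (zpow_pos (by positivity) _).trans_le hD
  have hdk : 1 ≤ d ^ k := one_le_pow₀ (by linarith)
  have hkey : 1 ≤ (d ^ k - 1) * D :=
    (one_le_pow_sub_one_mul_zpow hd hk).trans (mul_le_mul_of_nonneg_left hD (by linarith))
  have hratio : (1 + D) / (X + D) ≤ d ^ k := by
    rw [div_le_iff₀ (by linarith)]
    nlinarith
  rw [← log_pow]
  exact log_le_log (by positivity) hratio

lemma mul_div_mul_one_sub_eq {w g e c X Y D : ℝ} (hw : w ≠ 0) (hXD : X + D ≠ 0) :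
    w * ((g * e + (X + D) * c) / w) * (1 - 2 * Y / (X + D))
      = c * (X + D - 2 * Y) + g * (1 - 2 * Y / (X + D)) * e := by
  field_simp
  ring

lemma leaf_term_le {s X Y D M : ℝ} (hs : 0 ≤ s) (hX : 0 ≤ X) (hY : 0 ≤ Y) (hD : 0 < D)
    (hlog : log ((1 + D) / (X + D)) ≤ M) :
    s * (2 * Y * log ((1 + D) / (X + D)) + X) + -2 * X * s * (1 - 2 * Y / (X + D))
      ≤ -s * X + 2 * Y * s * (2 + M) := by
  have hfrac : X * (2 * Y / (X + D)) ≤ 2 * Y := by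
    rw [← mul_div_assoc, div_le_iff₀ (by linarith)]
    nlinarith
  nlinarith [mul_le_mul_of_nonneg_left hfrac hs, mul_le_mul_of_nonneg_left hlog (mul_nonneg hs hY)]

section RootedTree

variable {V : Type*} [Fintype V] [DecidableEq V] (r : V) (p : V → V)

def children (u : V) : Finset V := univ.filter fun v => v ≠ r ∧ p v = u

def IsLeaf (u : V) : Prop := u ≠ r ∧ ∀ v, v ≠ r → p v ≠ u

/-- Solutions of the conservation equations of `K(T)`, without the normalisation and sign
constraints. -/
def flowSpace : Submodule ℝ (V → ℝ) where
  carrier := {f | ∀ u, ¬IsLeaf r p u → ∑ v ∈ children r p u, f v = f u}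
  add_mem' {f g} hf hg u hu := by
    simp only [Pi.add_apply, sum_add_distrib, hf u hu, hg u hu]
  zero_mem' u _ := by simp
  smul_mem' c f hf u hu := by
    simp only [Pi.smul_apply, smul_eq_mul, ← mul_sum, hf u hu]

variable {r p}

lemma apply_eq_of_mem_flowSpace {f : V → ℝ} (hf : f ∈ flowSpace r p) {cr : V}
    (hcr : ∀ v, (v ≠ r ∧ p v = r) ↔ v = cr) : f cr = f r := by
  have hchildren : children r p r = {cr} := by
    ext v
    simp [children, hcr v]
  simpa [hchildren] using hf r (fun h => h.1 rfl)

lemma sum_mul_parent_eq {f : V → ℝ} (hf : f ∈ flowSpace r p) {lam : V → ℝ}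
    (hlam : ∀ u, IsLeaf r p u → lam u = 0) :
    ∑ u ∈ univ.filter (· ≠ r), lam (p u) * f u = ∑ w, lam w * f w := by
  rw [← sum_fiberwise _ p]
  refine sum_congr rfl fun w _ => ?_
  have hfiber : ∑ u ∈ (univ.filter (· ≠ r)).filter (p · = w), lam (p u) * f u
      = lam w * ∑ v ∈ children r p w, f v := by
    rw [filter_filter, mul_sum]
    exact sum_congr rfl fun u hu => by rw [(mem_filter.1 hu).2.2]
  rw [hfiber]
  by_cases hw : IsLeaf r p w
  · simp [hlam w hw]
  · rw [hf w hw]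

lemma sum_sub_mul_eq_zero {f : V → ℝ} (hf : f ∈ flowSpace r p) (hfr : f r = 0) {lam : V → ℝ}
    (hlam : ∀ u, IsLeaf r p u → lam u = 0) :
    ∑ u ∈ univ.filter (· ≠ r), (lam (p u) - lam u) * f u = 0 := by
  have hself : ∑ u ∈ univ.filter (· ≠ r), lam u * f u = ∑ w, lam w * f w := by
    rw [filter_ne' univ r]
    exact sum_erase _ (by rw [hfr, mul_zero])
  simp only [sub_mul, sum_sub_distrib, sum_mul_parent_eq hf hlam, hself, sub_self]

end RootedTree

theorem stmt2_general
    {V : Type*} [Fintype V] [DecidableEq V]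
    (r : V) (p : V → V)
    (cr : V) (hcr : ∀ v, (v ≠ r ∧ p v = r) ↔ v = cr)
    -- ℓ is a leaf
    (ℓ : V) (hℓ : ℓ ≠ r ∧ ∀ v, v ≠ r → p v ≠ ℓ)
    -- revised weights: w̃ > 0 on V⁰
    (wt : V → ℝ) (hwt : ∀ u, u ≠ r → 0 < wt u)
    -- x, y, δ ∈ K(T)
    (x y δ : V → ℝ)
    (hx : x r = 1 ∧ (∀ u, u ≠ r → 0 ≤ x u) ∧
      ∀ u, ¬(u ≠ r ∧ ∀ v, v ≠ r → p v ≠ u) →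
        ∑ v ∈ univ.filter (fun v => v ≠ r ∧ p v = u), x v = x u)
    (hy : y r = 1 ∧ (∀ u, u ≠ r → 0 ≤ y u) ∧
      ∀ u, ¬(u ≠ r ∧ ∀ v, v ≠ r → p v ≠ u) →
        ∑ v ∈ univ.filter (fun v => v ≠ r ∧ p v = u), y v = y u)
    (hδ : δ r = 1 ∧ (∀ u, u ≠ r → 0 ≤ δ u) ∧
      ∀ u, ¬(u ≠ r ∧ ∀ v, v ≠ r → p v ≠ u) →
        ∑ v ∈ univ.filter (fun v => v ≠ r ∧ p v = u), δ v = δ u)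
    (hδpos : ∀ u, u ≠ r → 0 < δ u)
    -- Lagrange multipliers
    (lam : V → ℝ)
    (hlam_leaf : ∀ u, (u ≠ r ∧ ∀ v, v ≠ r → p v ≠ u) → lam u = 0)
    -- rate and mirror-descent dynamic
    (s : ℝ) (hs : 0 ≤ s)
    (x' : V → ℝ)
    (hx' : ∀ u, u ≠ r → u ≠ cr →
      x' u = (-2 * x u * s * (if u = ℓ then 1 else 0)
              + (x u + δ u) * (lam (p u) - lam u)) / wt u)
    -- parameters d and k
    (d : ℝ) (hd : 2 ≤ d) (k : ℕ) (hk : 1 ≤ k)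
    (hδℓ : d ^ (1 - (k : ℤ)) ≤ δ ℓ) :
    s * (2 * y ℓ * Real.log ((1 + δ ℓ) / (x ℓ + δ ℓ)) + x ℓ)
        + ∑ u ∈ univ.filter (fun u => u ≠ r ∧ u ≠ cr),
            wt u * x' u * (1 - 2 * y u / (x u + δ u))
      ≤ -s * x ℓ + 2 * y ℓ * s * (2 + (k : ℝ) * Real.log d) := by
  obtain ⟨hxr, hxnn, hxflow⟩ := hx
  obtain ⟨hyr, hynn, hyflow⟩ := hy
  obtain ⟨hδr, -, hδflow⟩ := hδ
  set f : V → ℝ := x + δ - (2 : ℝ) • y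
  have hf : f ∈ flowSpace r p := sub_mem (add_mem hxflow hδflow) (Submodule.smul_mem _ 2 hyflow)
  have hfr : f r = 0 := by norm_num [f, hxr, hyr, hδr]
  have hfcr : f cr = 0 := (apply_eq_of_mem_flowSpace hf hcr).trans hfr
  have hsummand : ∀ u ∈ univ.filter (fun u => u ≠ r ∧ u ≠ cr),
      wt u * x' u * (1 - 2 * y u / (x u + δ u)) = (lam (p u) - lam u) * f u
        + if u = ℓ then -2 * x u * s * (1 - 2 * y u / (x u + δ u)) else 0 := by
    intro u hu
    obtain ⟨hur, hucr⟩ := (mem_filter.1 hu).2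
    have hxδ : x u + δ u ≠ 0 := (add_pos_of_nonneg_of_pos (hxnn u hur) (hδpos u hur)).ne'
    rw [hx' u hur hucr, mul_div_mul_one_sub_eq (hwt u hur).ne' hxδ]
    simp [f]
  have hlagrange : ∑ u ∈ univ.filter (fun u => u ≠ r ∧ u ≠ cr), (lam (p u) - lam u) * f u = 0 := by
    rw [← filter_filter, filter_ne' _ cr, sum_erase _ (by rw [hfcr, mul_zero])]
    exact sum_sub_mul_eq_zero hf hfr hlam_leaf
  have hleaf : (if ℓ ∈ univ.filter (fun u => u ≠ r ∧ u ≠ cr)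
      then -2 * x ℓ * s * (1 - 2 * y ℓ / (x ℓ + δ ℓ)) else 0)
      = -2 * x ℓ * s * (1 - 2 * y ℓ / (x ℓ + δ ℓ)) := by
    -- at `ℓ = c_r` we have `x_ℓ = y_ℓ = δ_ℓ = 1`, so the leaf term vanishes
    rw [ite_eq_left_iff]
    intro hmem
    obtain rfl : ℓ = cr := by simpa [hℓ.1] using hmem
    rw [apply_eq_of_mem_flowSpace hxflow hcr, apply_eq_of_mem_flowSpace hyflow hcr,
      apply_eq_of_mem_flowSpace hδflow hcr, hxr, hyr, hδr]
    norm_num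
  rw [sum_congr rfl hsummand, sum_add_distrib, hlagrange, sum_ite_eq', hleaf, zero_add]
  exact leaf_term_le hs (hxnn ℓ hℓ.1) (hynn ℓ hℓ.1) (hδpos ℓ hℓ.1)
    (log_one_add_div_add_le hd hk (hxnn ℓ hℓ.1) hδℓ)

/-- Lemma: upper bound on the rate of change of the modified Bregman
divergence `D = Σ_{u∈V⁰} w̃_u·(2·y_u·log((1+δ_u)/(x_u+δ_u)) + x_u)` in a continuous step. -/
theorem stmt2
    {V : Type*} [Fintype V] [DecidableEq V]
    (r : V) (p : V → V) (dep : V → ℕ)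
    (hdep_r : dep r = 0)
    (hdep : ∀ u, u ≠ r → dep u = dep (p u) + 1)
    (cr : V) (hcr : ∀ v, (v ≠ r ∧ p v = r) ↔ v = cr)
    -- ℓ is a leaf
    (ℓ : V) (hℓ : ℓ ≠ r ∧ ∀ v, v ≠ r → p v ≠ ℓ)
    -- revised weights: w̃ > 0 on V⁰
    (wt : V → ℝ) (hwt : ∀ u, u ≠ r → 0 < wt u)
    -- x, y, δ ∈ K(T)
    (x y δ : V → ℝ)
    (hx : x r = 1 ∧ (∀ u, u ≠ r → 0 ≤ x u) ∧
      ∀ u, ¬(u ≠ r ∧ ∀ v, v ≠ r → p v ≠ u) →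
        ∑ v ∈ univ.filter (fun v => v ≠ r ∧ p v = u), x v = x u)
    (hy : y r = 1 ∧ (∀ u, u ≠ r → 0 ≤ y u) ∧
      ∀ u, ¬(u ≠ r ∧ ∀ v, v ≠ r → p v ≠ u) →
        ∑ v ∈ univ.filter (fun v => v ≠ r ∧ p v = u), y v = y u)
    (hδ : δ r = 1 ∧ (∀ u, u ≠ r → 0 ≤ δ u) ∧
      ∀ u, ¬(u ≠ r ∧ ∀ v, v ≠ r → p v ≠ u) →
        ∑ v ∈ univ.filter (fun v => v ≠ r ∧ p v = u), δ v = δ u)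
    (hδpos : ∀ u, u ≠ r → 0 < δ u)
    -- Lagrange multipliers
    (lam : V → ℝ)
    (hlam_nonneg : ∀ u, 0 ≤ lam u)
    (hlam_leaf : ∀ u, (u ≠ r ∧ ∀ v, v ≠ r → p v ≠ u) → lam u = 0)
    -- rate and mirror-descent dynamic
    (s : ℝ) (hs : 0 ≤ s)
    (x' : V → ℝ)
    (hx' : ∀ u, u ≠ r → u ≠ cr →
      x' u = (-2 * x u * s * (if u = ℓ then 1 else 0)
              + (x u + δ u) * (lam (p u) - lam u)) / wt u)
    -- parameters d and k
    (d : ℝ) (hd : 2 ≤ d) (k : ℕ) (hk : 1 ≤ k)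
    (hδℓ : d ^ (1 - (k : ℤ)) ≤ δ ℓ) :
    s * (2 * y ℓ * Real.log ((1 + δ ℓ) / (x ℓ + δ ℓ)) + x ℓ)
        + ∑ u ∈ univ.filter (fun u => u ≠ r ∧ u ≠ cr),
            wt u * x' u * (1 - 2 * y u / (x u + δ u))
      ≤ -s * x ℓ + 2 * y ℓ * s * (2 + (k : ℝ) * Real.log d) :=
  stmt2_general r p cr hcr ℓ hℓ wt hwt x y δ hx hy hδ hδpos lam hlam_leaf s hs x' hx' d hd k hk hδℓ
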